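/- arXiv:1505.03957 — 3 statements merged into one kernel-verified Lean document; each statement's English description precedes it below -/
import Mathlib

section
/- Let f₁,…,f_ℓ, g₁,…,g_r ∈ ℂ[T] be nonzero polynomials such that Z(f₁⋯f_ℓ) ∩ Z(g₁⋯g_r) = ∅. Then for all natural numbers n₁,…,n_ℓ, m₁,…,m_r ≥ 0 and every t ∈ ℂ, the multiplicity of t as a root of the polynomial f₁^{n₁}⋯f_ℓ^{n_ℓ} − g₁^{m₁}⋯g_r^{m_r} is at most Σ_{i=1}^{ℓ} d_{f_i} + Σ_{j=1}^{r} d_{g_j}. -/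
/-!
With `W = a b' - a' b` the Wronskian, the Mason–Stothers argument gives the bound: `W` is divisible
by `a / rad a` and `b / rad b`, and by `(X - t)^(e-1)` when `t` is a root of `a - b` of
multiplicity `e`, since `W = (a - b) b' - (a - b)' b`. For coprime `a, b` these factors are
pairwise coprime, and `W ≠ 0` unless `a - b` is constant, so comparing with
`deg W < deg a + deg b` yields `e ≤ deg rad a + deg rad b`. For `a = ∏ fᵢ^{nᵢ}` the radical
divides `∏ fᵢ`, and the disjointness of zero sets over `ℂ` is coprimality.
-/

open Polynomial UniqueFactorizationMonoid EuclideanDomain Finset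

namespace Polynomial

theorem isRoot_prod_of_isRoot_prod_pow {R ι : Type*} [CommRing R] [IsDomain R]
    (s : Finset ι) (f : ι → R[X]) (n : ι → ℕ) {x : R} (h : (∏ i ∈ s, f i ^ n i).IsRoot x) :
    (∏ i ∈ s, f i).IsRoot x := by
  simp only [IsRoot.def, eval_prod, eval_pow, prod_eq_zero_iff, pow_eq_zero_iff'] at h ⊢
  obtain ⟨i, hi, hfi, -⟩ := h
  exact ⟨i, hi, hfi⟩

theorem pow_rootMultiplicity_sub_sub_one_dvd_wronskian {R : Type*} [CommRing R]
    (a b : R[X]) (t : R) :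
    (X - C t) ^ ((a - b).rootMultiplicity t - 1) ∣ wronskian a b := by
  have hW : wronskian a b = wronskian (a - b) b := by
    rw [sub_eq_add_neg, wronskian_add_left, wronskian_neg_left, wronskian_self_eq_zero, neg_zero,
      add_zero]
  have hdvd := pow_rootMultiplicity_dvd (a - b) t
  rw [hW, wronskian]
  exact dvd_sub (((pow_dvd_pow _ (Nat.sub_le _ _)).trans hdvd).mul_right _)
    ((pow_sub_one_dvd_derivative_of_pow_dvd hdvd).mul_right _)

variable {k : Type*} [Field k]

theorem _root_.IsCoprime.isCoprime_X_sub_C_mul {a b : k[X]} (hab : IsCoprime a b) {t : k}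
    (ht : (a - b).IsRoot t) : IsCoprime (X - C t) (a * b) := by
  refine (irreducible_X_sub_C t).coprime_iff_not_dvd.2 fun hdvd => ?_
  rw [IsRoot, eval_sub, sub_eq_zero] at ht
  rw [dvd_iff_isRoot, IsRoot, eval_mul, ht, mul_self_eq_zero] at hdvd
  simpa [ht, hdvd] using aeval_ne_zero_of_isCoprime hab t

variable [DecidableEq k]

theorem natDegree_divRadical_add_natDegree_radical {a : k[X]} (ha : a ≠ 0) :
    (divRadical a).natDegree + (radical a).natDegree = a.natDegree := by
  rw [← natDegree_mul (divRadical_ne_zero ha) radical_ne_zero, divRadical_mul_radical]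

theorem _root_.IsCoprime.pow_mul_divRadical_mul_divRadical_dvd_wronskian {a b : k[X]}
    (hab : IsCoprime a b) (t : k) :
    (X - C t) ^ ((a - b).rootMultiplicity t - 1) * (divRadical a * divRadical b) ∣
      wronskian a b := by
  have hcop : IsCoprime ((X - C t) ^ ((a - b).rootMultiplicity t - 1))
      (divRadical a * divRadical b) := by
    obtain he | he := Nat.eq_zero_or_pos ((a - b).rootMultiplicity t)
    · rw [he, pow_zero]
      exact isCoprime_one_left
    exact (hab.isCoprime_X_sub_C_mul (rootMultiplicity_pos'.1 he).2).pow_left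
      |>.of_isCoprime_of_dvd_right (mul_dvd_mul (divRadical_dvd_self a) (divRadical_dvd_self b))
  exact hcop.mul_dvd (pow_rootMultiplicity_sub_sub_one_dvd_wronskian a b t)
    (hab.divRadical.mul_dvd (divRadical_dvd_wronskian_left a b)
      (divRadical_dvd_wronskian_right a b))

theorem _root_.IsCoprime.rootMultiplicity_sub_le [CharZero k] {a b : k[X]} (hab : IsCoprime a b)
    (t : k) : (a - b).rootMultiplicity t ≤ (radical a).natDegree + (radical b).natDegree := by
  by_cases hW : wronskian a b = 0
  · obtain ⟨ha', hb'⟩ := hab.wronskian_eq_zero_iff.1 hW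
    have hconst : derivative (a - b) = 0 := by rw [derivative_sub, ha', hb', sub_zero]
    rw [eq_C_of_derivative_eq_zero hconst, rootMultiplicity_C]
    exact Nat.zero_le _
  have ha : a ≠ 0 := by rintro rfl; exact hW (wronskian_zero_left b)
  have hb : b ≠ 0 := by rintro rfl; exact hW (wronskian_zero_right a)
  have hdeg := natDegree_le_of_dvd (hab.pow_mul_divRadical_mul_divRadical_dvd_wronskian t) hW
  rw [natDegree_mul (pow_ne_zero _ (X_sub_C_ne_zero t))
    (mul_ne_zero (divRadical_ne_zero ha) (divRadical_ne_zero hb)), natDegree_mul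
    (divRadical_ne_zero ha) (divRadical_ne_zero hb), natDegree_pow, natDegree_X_sub_C] at hdeg
  have := natDegree_wronskian_lt_add hW
  have := natDegree_divRadical_add_natDegree_radical ha
  have := natDegree_divRadical_add_natDegree_radical hb
  omega

theorem natDegree_radical_prod_pow_le {ι : Type*} (s : Finset ι) (f : ι → k[X])
    (n : ι → ℕ) :
    (radical (∏ i ∈ s, f i ^ n i)).natDegree ≤ ∑ i ∈ s, (f i).natDegree :=
  calc (radical (∏ i ∈ s, f i ^ n i)).natDegree
      ≤ (∏ i ∈ s, radical (f i)).natDegree :=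
        natDegree_le_of_dvd (radical_prod_dvd.trans (prod_dvd_prod_of_dvd _ _ fun _ _ =>
          radical_pow_dvd)) (prod_ne_zero_iff.2 fun _ _ => radical_ne_zero)
    _ = ∑ i ∈ s, (radical (f i)).natDegree := natDegree_prod _ _ fun _ _ => radical_ne_zero
    _ ≤ ∑ i ∈ s, (f i).natDegree := sum_le_sum fun _ _ => natDegree_radical_le

end Polynomial

theorem stmt_11_general (ℓ r : ℕ) (f : Fin ℓ → Polynomial ℂ) (g : Fin r → Polynomial ℂ)
    (hZ : ∀ t : ℂ, ¬ ((∏ i, f i).eval t = 0 ∧ (∏ j, g j).eval t = 0))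
    (n : Fin ℓ → ℕ) (m : Fin r → ℕ) (t : ℂ) :
    (∏ i, f i ^ n i - ∏ j, g j ^ m j).rootMultiplicity t ≤
      ∑ i, (f i).natDegree + ∑ j, (g j).natDegree := by
  have hcop : IsCoprime (∏ i, f i ^ n i) (∏ j, g j ^ m j) := by
    refine (isCoprime_iff_aeval_ne_zero_of_isAlgClosed ℂ ℂ _ _).2 fun s => ?_
    simp only [coe_aeval_eq_eval, ← not_and_or]
    exact fun h => hZ s ⟨isRoot_prod_of_isRoot_prod_pow _ _ _ h.1,
      isRoot_prod_of_isRoot_prod_pow _ _ _ h.2⟩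
  exact (hcop.rootMultiplicity_sub_le t).trans
    (add_le_add (natDegree_radical_prod_pow_le _ _ _) (natDegree_radical_prod_pow_le _ _ _))

/-- Lemma 2.8 (multiplicities of zeros): if the zero sets of `f₁⋯f_ℓ` and `g₁⋯g_r`
are disjoint, then every root of `∏ fᵢ^{nᵢ} − ∏ gⱼ^{mⱼ}` has multiplicity at most
`∑ d_{fᵢ} + ∑ d_{gⱼ}`. -/
theorem stmt_11 (ℓ r : ℕ) (f : Fin ℓ → Polynomial ℂ) (g : Fin r → Polynomial ℂ)
    (hf : ∀ i, f i ≠ 0) (hg : ∀ j, g j ≠ 0)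
    (hZ : ∀ t : ℂ, ¬ ((∏ i, f i).eval t = 0 ∧ (∏ j, g j).eval t = 0))
    (n : Fin ℓ → ℕ) (m : Fin r → ℕ) (t : ℂ) :
    (∏ i, f i ^ n i - ∏ j, g j ^ m j).rootMultiplicity t ≤
      ∑ i, (f i).natDegree + ∑ j, (g j).natDegree :=
  stmt_11_general ℓ r f g hZ n m t
end

section
/- Let h₁,…,h_ℓ ∈ ℂ(T) be rational functions with h_i = f_i/g_i, where f_i, g_i ∈ ℂ[T] are nonzero polynomials and Z(f₁⋯f_ℓ) ∩ Z(g₁⋯g_ℓ) = ∅. Then for all natural numbers n₁,…,n_ℓ ≥ 0 and every t ∈ ℂ, the multiplicity of t as a zero of h₁^{n₁}⋯h_ℓ^{n_ℓ} − 1, i.e., the multiplicity of t as a root of the polynomial f₁^{n₁}⋯f_ℓ^{n_ℓ} − g₁^{n₁}⋯g_ℓ^{n_ℓ}, is at most Σ_{i=1}^{ℓ} (deg f_i + deg g_i). -/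
/-!
Write `F = ∏ fᵢ^{nᵢ}`, `G = ∏ gᵢ^{nᵢ}`. Logarithmic differentiation gives
`W(F, G) · ∏ fᵢ ∏ gᵢ = F · G · V`, where `W(a, b) = a b' - a' b` is the Wronskian and
`deg V < ∑ (deg fᵢ + deg gᵢ)`. A root `t` of `F - G` of multiplicity `e` is a root of
multiplicity at least `e - 1` of `W(F - G, G) = W(F, G)`, and this Wronskian is nonzero because
`G(t) ≠ 0`. Since the zero sets are disjoint, `F(t) G(t) ≠ 0`, so `(X - t)^(e-1)` divides `V`,
whence `e - 1 ≤ deg V`.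
-/

open Polynomial

namespace Polynomial

section CommRing

variable {R ι : Type*} [CommRing R]

theorem pow_rootMultiplicity_sub_one_dvd_wronskian (p q : R[X]) (t : R) :
    (X - C t) ^ (p.rootMultiplicity t - 1) ∣ wronskian p q := by
  have hp := pow_rootMultiplicity_dvd p t
  exact dvd_sub (((pow_dvd_pow _ (Nat.sub_le _ 1)).trans hp).mul_right _)
    ((pow_sub_one_dvd_derivative_of_pow_dvd hp).mul_right _)

theorem degree_derivative_lt_natDegree (p : R[X]) : (derivative p).degree < p.natDegree := by
  rcases eq_or_ne p.natDegree 0 with h | h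
  · rw [h, derivative_of_natDegree_zero h, degree_zero]
    exact WithBot.bot_lt_coe 0
  · exact degree_le_natDegree.trans_lt (WithBot.coe_lt_coe.2 (natDegree_derivative_lt h))

theorem degree_prod_le_sum_natDegree (s : Finset ι) (f : ι → R[X]) :
    (∏ i ∈ s, f i).degree ≤ ∑ i ∈ s, (f i).natDegree :=
  degree_le_natDegree.trans (WithBot.coe_le_coe.2 (natDegree_prod_le s f))

variable [DecidableEq ι]

/-- For `F = ∏ fᵢ ^ nᵢ`, the logarithmic derivative `F' / F` is `logDerivNum s f n / ∏ fᵢ`. -/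
noncomputable def logDerivNum (s : Finset ι) (f : ι → R[X]) (n : ι → ℕ) : R[X] :=
  ∑ i ∈ s, n i • (derivative (f i) * ∏ j ∈ s.erase i, f j)

theorem derivative_prod_pow_mul_prod (s : Finset ι) (f : ι → R[X]) (n : ι → ℕ) :
    derivative (∏ i ∈ s, f i ^ n i) * ∏ i ∈ s, f i =
      (∏ i ∈ s, f i ^ n i) * logDerivNum s f n := by
  rw [derivative_prod_finset, logDerivNum, Finset.sum_mul, Finset.mul_sum]
  refine Finset.sum_congr rfl fun i hi => ?_
  rw [← Finset.mul_prod_erase s _ hi, ← Finset.mul_prod_erase s (fun j => f j ^ n j) hi,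
    derivative_pow, nsmul_eq_mul]
  rcases Nat.eq_zero_or_eq_succ_pred (n i) with h | h
  · simp [h]
  · rw [h, pow_succ, Nat.succ_sub_one, ← C_eq_natCast]
    ring

theorem wronskian_prod_pow_mul_prod (s : Finset ι) (f g : ι → R[X]) (n : ι → ℕ) :
    wronskian (∏ i ∈ s, f i ^ n i) (∏ i ∈ s, g i ^ n i) * ((∏ i ∈ s, f i) * ∏ i ∈ s, g i) =
      (∏ i ∈ s, f i ^ n i) * (∏ i ∈ s, g i ^ n i) *
        (logDerivNum s g n * ∏ i ∈ s, f i - logDerivNum s f n * ∏ i ∈ s, g i) := by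
  rw [wronskian]
  linear_combination (∏ i ∈ s, f i ^ n i) * (∏ i ∈ s, f i) * derivative_prod_pow_mul_prod s g n -
    (∏ i ∈ s, g i ^ n i) * (∏ i ∈ s, g i) * derivative_prod_pow_mul_prod s f n

theorem degree_logDerivNum_lt (s : Finset ι) (f : ι → R[X]) (n : ι → ℕ) :
    (logDerivNum s f n).degree < ∑ i ∈ s, (f i).natDegree := by
  refine (degree_sum_le _ _).trans_lt
    ((Finset.sup_lt_iff (WithBot.bot_lt_coe _)).2 fun i hi => ?_)
  calc (n i • (derivative (f i) * ∏ j ∈ s.erase i, f j)).degree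
      ≤ (derivative (f i)).degree + (∏ j ∈ s.erase i, f j).degree :=
        (degree_smul_le _ _).trans (degree_mul_le _ _)
    _ ≤ (derivative (f i)).degree + (∑ j ∈ s.erase i, (f j).natDegree : ℕ) := by
        gcongr; exact degree_prod_le_sum_natDegree _ _
    _ < (f i).natDegree + (∑ j ∈ s.erase i, (f j).natDegree : ℕ) :=
        WithBot.add_lt_add_right WithBot.coe_ne_bot (degree_derivative_lt_natDegree _)
    _ = ∑ i ∈ s, (f i).natDegree := by
        rw [← Nat.cast_add, Finset.add_sum_erase s (fun j => (f j).natDegree) hi]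

theorem degree_logDerivNum_mul_prod_lt (s : Finset ι) (f g : ι → R[X]) (n : ι → ℕ) :
    (logDerivNum s f n * ∏ i ∈ s, g i).degree <
      ↑(∑ i ∈ s, (f i).natDegree + ∑ i ∈ s, (g i).natDegree) :=
  calc (logDerivNum s f n * ∏ i ∈ s, g i).degree
      ≤ (logDerivNum s f n).degree + (∑ i ∈ s, (g i).natDegree : ℕ) :=
        (degree_mul_le _ _).trans (by gcongr; exact degree_prod_le_sum_natDegree s g)
    _ < _ := WithBot.add_lt_add_right WithBot.coe_ne_bot (degree_logDerivNum_lt s f n)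

theorem degree_logDerivNum_mul_prod_sub_lt (s : Finset ι) (f g : ι → R[X]) (n : ι → ℕ) :
    (logDerivNum s g n * ∏ i ∈ s, f i - logDerivNum s f n * ∏ i ∈ s, g i).degree <
      ↑(∑ i ∈ s, ((f i).natDegree + (g i).natDegree)) := by
  refine (degree_sub_le _ _).trans_lt (max_lt ?_ ?_) <;> rw [Finset.sum_add_distrib]
  · rw [add_comm]
    exact degree_logDerivNum_mul_prod_lt s g f n
  · exact degree_logDerivNum_mul_prod_lt s f g n

end CommRing

theorem eval_prod_eq_zero_of_eval_prod_pow_eq_zero {R ι : Type*} [CommRing R] [IsDomain R]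
    (s : Finset ι) (f : ι → R[X]) (n : ι → ℕ) {t : R} (h : (∏ i ∈ s, f i ^ n i).eval t = 0) :
    (∏ i ∈ s, f i).eval t = 0 := by
  simp only [eval_prod, eval_pow, Finset.prod_eq_zero_iff] at h ⊢
  obtain ⟨i, hi, h⟩ := h
  exact ⟨i, hi, eq_zero_of_pow_eq_zero h⟩

section Field

variable {K : Type*} [Field K]

theorem pow_X_sub_C_dvd_of_dvd_mul_of_eval_ne_zero {p q : K[X]} {t : K} {k : ℕ}
    (hp : p.eval t ≠ 0) (h : (X - C t) ^ k ∣ p * q) : (X - C t) ^ k ∣ q :=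
  ((irreducible_X_sub_C t).coprime_iff_not_dvd.2 (mt dvd_iff_isRoot.1 hp)).pow_left
    |>.dvd_of_dvd_mul_left h

variable [CharZero K]

theorem wronskian_ne_zero_of_isRoot {p q : K[X]} {t : K} (hp : p ≠ 0) (hpt : p.IsRoot t)
    (hq : q.eval t ≠ 0) : wronskian p q ≠ 0 := by
  intro hw
  have hp' : derivative p ≠ 0 := by
    intro h0
    obtain ⟨a, rfl⟩ := natDegree_eq_zero.mp (derivative_eq_zero.1 h0)
    exact hp (by simpa using hpt)
  have hdvd : (X - C t) ^ p.rootMultiplicity t ∣ derivative p := by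
    refine pow_X_sub_C_dvd_of_dvd_mul_of_eval_ne_zero hq ?_
    rw [mul_comm, ← sub_eq_zero.mp hw]
    exact (pow_rootMultiplicity_dvd p t).mul_right _
  have hle := (le_rootMultiplicity_iff hp').2 hdvd
  rw [derivative_rootMultiplicity_of_root hpt] at hle
  have hpos := (rootMultiplicity_pos hp).2 hpt
  omega

theorem rootMultiplicity_sub_le_of_wronskian_mul_eq {F G R V : K[X]} {t : K} {N : ℕ}
    (ht : ¬ (F.eval t = 0 ∧ G.eval t = 0)) (hR : R ≠ 0)
    (hwr : wronskian F G * R = F * G * V) (hV : V.degree < N) :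
    (F - G).rootMultiplicity t ≤ N := by
  by_cases hroot : (F - G).IsRoot t
  swap
  · simp [rootMultiplicity_eq_zero hroot]
  by_cases hP : F - G = 0
  · simp [hP]
  have hFG : F.eval t = G.eval t := sub_eq_zero.1 (by simpa using hroot)
  have hGt : G.eval t ≠ 0 := fun hG => ht ⟨hFG.trans hG, hG⟩
  have hwr' : wronskian (F - G) G * R = F * G * V := by
    rw [← hwr, wronskian, wronskian, derivative_sub]
    ring
  have hV0 : V ≠ 0 :=
    right_ne_zero_of_mul (hwr' ▸ mul_ne_zero (wronskian_ne_zero_of_isRoot hP hroot hGt) hR)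
  have hdvd : (X - C t) ^ ((F - G).rootMultiplicity t - 1) ∣ V :=
    pow_X_sub_C_dvd_of_dvd_mul_of_eval_ne_zero (p := F * G) (by simpa [hFG] using hGt)
      (hwr' ▸ (pow_rootMultiplicity_sub_one_dvd_wronskian _ _ t).mul_right _)
  have hle := natDegree_le_of_dvd hdvd hV0
  rw [natDegree_pow, natDegree_X_sub_C, mul_one] at hle
  have hlt := (natDegree_lt_iff_degree_lt hV0).2 hV
  omega

end Field

end Polynomial

/-- Corollary 2.9 (multiplicities of zeros of `h₁^{n₁}⋯h_ℓ^{n_ℓ} − 1` for rational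
functions `hᵢ = fᵢ/gᵢ` with disjoint zero sets of numerators and denominators):
every root of `∏ fᵢ^{nᵢ} − ∏ gᵢ^{nᵢ}` has multiplicity at most `∑ (deg fᵢ + deg gᵢ)`. -/
theorem stmt_12 (ℓ : ℕ) (f g : Fin ℓ → Polynomial ℂ)
    (hf : ∀ i, f i ≠ 0) (hg : ∀ i, g i ≠ 0)
    (hZ : ∀ t : ℂ, ¬ ((∏ i, f i).eval t = 0 ∧ (∏ i, g i).eval t = 0))
    (n : Fin ℓ → ℕ) (t : ℂ) :
    (∏ i, f i ^ n i - ∏ i, g i ^ n i).rootMultiplicity t ≤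
      ∑ i, ((f i).natDegree + (g i).natDegree) := by
  refine rootMultiplicity_sub_le_of_wronskian_mul_eq ?_ ?_
    (wronskian_prod_pow_mul_prod _ f g n) (degree_logDerivNum_mul_prod_sub_lt _ f g n)
  · exact fun ⟨hF, hG⟩ => hZ t ⟨eval_prod_eq_zero_of_eval_prod_pow_eq_zero _ f n hF,
      eval_prod_eq_zero_of_eval_prod_pow_eq_zero _ g n hG⟩
  · exact mul_ne_zero (Finset.prod_ne_zero_iff.2 fun i _ => hf i)
      (Finset.prod_ne_zero_iff.2 fun i _ => hg i)
end

section
/- Let D ≥ 1 and let F₁,…,F_{ℓ+1} ∈ ℂ[X₁,…,X_ℓ] be polynomials of total degree at most D. Then there exists a nonzero polynomial R ∈ ℂ[Z₁,…,Z_{ℓ+1}] of total degree at most D^ℓ such that R(F₁,…,F_{ℓ+1}) = 0 in ℂ[X₁,…,X_ℓ]. -/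
open MvPolynomial

noncomputable section Perron13

namespace Perron13

variable (ℓ : ℕ) (D : ℕ)

abbrev Rt : Type := Polynomial ℂ

abbrev PX (ℓ : ℕ) : Type := MvPolynomial (Fin ℓ) Rt

/-- function to finsupp exponent -/
def ef (f : Fin ℓ → ℕ) : Fin ℓ →₀ ℕ := Finsupp.equivFunOnFinite.symm f

@[simp] lemma ef_apply (f : Fin ℓ → ℕ) (i : Fin ℓ) : ef ℓ f i = f i := rfl

lemma ef_injective : Function.Injective (ef ℓ) := Finsupp.equivFunOnFinite.symm.injective

lemma ef_sum (f : Fin ℓ → ℕ) : ((ef ℓ f).sum fun _ e => e) = ∑ i, f i :=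
  Finsupp.sum_fintype _ _ fun _ => rfl

lemma sum_support_eq (α : Fin ℓ →₀ ℕ) : (∑ i ∈ α.support, α i) = ∑ i, α i :=
  Finset.sum_subset (Finset.subset_univ _) fun i _ h => Finsupp.notMem_support_iff.mp h

/-- coefficient vanishing when the exponent has too large total degree -/
lemma coeff_zero_of_lt {A : Type*} [CommSemiring A] (p : MvPolynomial (Fin ℓ) A)
    (α : Fin ℓ →₀ ℕ) (h : p.totalDegree < ∑ i, α i) : coeff α p = 0 := by
  apply coeff_eq_zero_of_totalDegree_lt
  rwa [sum_support_eq]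

lemma td_map_le {A B : Type*} [CommSemiring A] [CommSemiring B] (f : A →+* B)
    (p : MvPolynomial (Fin ℓ) A) : (p.map f).totalDegree ≤ p.totalDegree :=
  Finset.sup_mono (support_map_subset _ _)

/-- monomial with coefficient 1 as a product of variables -/
lemma mono_eq_prod {A : Type*} [CommSemiring A] (f : Fin ℓ → ℕ) :
    (monomial (ef ℓ f) (1 : A)) = ∏ i, (X i : MvPolynomial (Fin ℓ) A) ^ f i := by
  rw [monomial_eq, C_1, one_mul, Finsupp.prod_fintype]
  · simp
  · intro i; exact pow_zero _

lemma td_mono_le {A : Type*} [CommSemiring A] (f : Fin ℓ → ℕ) :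
    (monomial (ef ℓ f) (1 : A)).totalDegree ≤ ∑ i, f i := by
  refine (totalDegree_monomial_le _ _).trans ?_
  rw [show ((ef ℓ f).sum fun _ e => id e) = ((ef ℓ f).sum fun _ e => e) from rfl, ef_sum]


def ev1 : Rt →+* ℂ := Polynomial.evalRingHom 1
def ev0 : Rt →+* ℂ := Polynomial.evalRingHom 0

/-- the reference tuple: `E 0 = 0`, `E (succ j) = X j ^ D`. -/
def EE : Fin (ℓ + 1) → PX ℓ := Fin.cases 0 fun j => X j ^ D

def ECC : Fin (ℓ + 1) → MvPolynomial (Fin ℓ) ℂ := Fin.cases 0 fun j => X j ^ D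

variable (F : Fin (ℓ + 1) → MvPolynomial (Fin ℓ) ℂ)

/-- the 1-parameter deformation of `F` towards `E`. -/
def HH (i : Fin (ℓ + 1)) : PX ℓ :=
  C (1 - Polynomial.X) * (F i).map Polynomial.C + C Polynomial.X * EE ℓ D i

lemma map_ev1_EE (i : Fin (ℓ + 1)) :
    MvPolynomial.map (ev1) (EE ℓ D i) = ECC ℓ D i := by
  induction i using Fin.cases with
  | zero => simp [EE, ECC]
  | succ j => simp [EE, ECC]

lemma map_ev1_HH (i : Fin (ℓ + 1)) :
    MvPolynomial.map (ev1) (HH ℓ D F i) = ECC ℓ D i := by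
  rw [HH, map_add, map_mul, map_mul, MvPolynomial.map_C, MvPolynomial.map_C,
    MvPolynomial.map_map, map_ev1_EE]
  simp [ev1]

lemma map_ev0_HH (i : Fin (ℓ + 1)) :
    MvPolynomial.map (ev0) (HH ℓ D F i) = F i := by
  rw [HH, map_add, map_mul, map_mul, MvPolynomial.map_C, MvPolynomial.map_C,
    MvPolynomial.map_map]
  have h1 : ev0.comp (Polynomial.C : ℂ →+* Rt) = RingHom.id ℂ := by
    ext x; simp [ev0]
  have h2 : ev0 (1 - Polynomial.X) = 1 := by simp [ev0]
  have h3 : ev0 Polynomial.X = 0 := by simp [ev0]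
  rw [h1, h2, h3, MvPolynomial.map_id]
  simp

lemma td_map_le' {A B : Type*} [CommSemiring A] [CommSemiring B] (f : A →+* B)
    (p : MvPolynomial (Fin ℓ) A) : (p.map f).totalDegree ≤ p.totalDegree :=
  Finset.sup_mono (support_map_subset _ _)

lemma td_EE (i : Fin (ℓ + 1)) : (EE ℓ D i).totalDegree ≤ D := by
  induction i using Fin.cases with
  | zero => simp [EE]
  | succ j => simp [EE]

variable (hdeg : ∀ i, (F i).totalDegree ≤ D)

include hdeg in
lemma td_HH (i : Fin (ℓ + 1)) : (HH ℓ D F i).totalDegree ≤ D := by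
  refine (totalDegree_add _ _).trans ?_
  rw [max_le_iff]
  constructor
  · refine (totalDegree_mul _ _).trans ?_
    rw [totalDegree_C, zero_add]
    exact (td_map_le' ℓ _ _).trans (hdeg i)
  · refine (totalDegree_mul _ _).trans ?_
    rw [totalDegree_C, zero_add]
    exact td_EE ℓ D i

/-- the basic products: `∏ H_{succ j} ^ (δ j / D) * X^(δ % D)`. -/
def TT (δ : Fin ℓ → ℕ) : PX ℓ :=
  (∏ j, HH ℓ D F j.succ ^ (δ j / D)) * monomial (ef ℓ fun i => δ i % D) 1

include hdeg in
lemma td_TT (δ : Fin ℓ → ℕ) : (TT ℓ D F δ).totalDegree ≤ ∑ i, δ i := by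
  refine (totalDegree_mul _ _).trans ?_
  have h1 : (∏ j, HH ℓ D F j.succ ^ (δ j / D)).totalDegree ≤ ∑ j, δ j / D * D := by
    refine (totalDegree_finset_prod _ _).trans (Finset.sum_le_sum fun j _ => ?_)
    refine (totalDegree_pow _ _).trans ?_
    exact Nat.mul_le_mul_left _ (td_HH ℓ D F hdeg _)
  have h2 : (monomial (ef ℓ fun i => δ i % D) (1:Rt)).totalDegree ≤ ∑ i, δ i % D := by
    refine (totalDegree_monomial_le _ _).trans ?_
    rw [show ((ef ℓ fun i => δ i % D).sum fun _ e => id e)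
        = ((ef ℓ fun i => δ i % D).sum fun _ e => e) from rfl]
    rw [show ((ef ℓ fun i => δ i % D).sum fun _ e => e) = ∑ i, δ i % D from
      Finsupp.sum_fintype _ _ fun _ => rfl]
  calc (∏ j, HH ℓ D F j.succ ^ (δ j / D)).totalDegree
        + (monomial (ef ℓ fun i => δ i % D) (1:Rt)).totalDegree
      ≤ (∑ j, δ j / D * D) + ∑ i, δ i % D := Nat.add_le_add h1 h2
    _ = ∑ i, (δ i / D * D + δ i % D) := by rw [Finset.sum_add_distrib]
    _ = ∑ i, δ i := by
        refine Finset.sum_congr rfl fun i _ => ?_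
        rw [mul_comm]
        exact Nat.div_add_mod _ _

lemma map_ev1_TT (δ : Fin ℓ → ℕ) :
    MvPolynomial.map (ev1) (TT ℓ D F δ) = monomial (ef ℓ δ) (1 : ℂ) := by
  rw [TT, map_mul]
  rw [show (MvPolynomial.map ev1 (∏ j, HH ℓ D F j.succ ^ (δ j / D)))
      = ∏ j, (X j ^ D : MvPolynomial (Fin ℓ) ℂ) ^ (δ j / D) by
    rw [map_prod]; refine Finset.prod_congr rfl fun j _ => ?_
    rw [map_pow, map_ev1_HH]; rfl]
  rw [MvPolynomial.map_monomial, map_one, mono_eq_prod, mono_eq_prod, ← Finset.prod_mul_distrib]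
  refine Finset.prod_congr rfl fun i _ => ?_
  rw [← pow_mul, ← pow_add, Nat.div_add_mod]


/-! ### The index types and coefficient matrices -/

/-- exponent functions of weight at most `N` -/
def Jt (N : ℕ) : Type := {g : Fin ℓ → Fin (N + 1) // ∑ i, (g i : ℕ) ≤ N}

instance (N : ℕ) : Fintype (Jt ℓ N) := by unfold Jt; infer_instance
instance (N : ℕ) : DecidableEq (Jt ℓ N) := by unfold Jt; infer_instance

def jf {N : ℕ} (g : Jt ℓ N) : Fin ℓ → ℕ := fun i => (g.1 i : ℕ)

lemma jf_injective {N : ℕ} : Function.Injective (jf ℓ (N := N)) := by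
  intro a b h
  apply Subtype.ext
  funext i
  exact Fin.ext (congrFun h i)

lemma jf_sum_le {N : ℕ} (g : Jt ℓ N) : ∑ i, jf ℓ g i ≤ N := g.2

/-- build an element of `Jt` from a finsupp of small weight -/
def toJ {N : ℕ} (α : Fin ℓ →₀ ℕ) (h : ∑ i, α i ≤ N) : Jt ℓ N :=
  ⟨fun i => ⟨α i, Nat.lt_succ_of_le (le_trans (Finset.single_le_sum
      (f := fun i => α i) (fun _ _ => Nat.zero_le _) (Finset.mem_univ i)) h)⟩,
   by simpa using h⟩

@[simp] lemma jf_toJ {N : ℕ} (α : Fin ℓ →₀ ℕ) (h : ∑ i, α i ≤ N) :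
    jf ℓ (toJ ℓ α h) = fun i => α i := rfl

lemma ef_jf_toJ {N : ℕ} (α : Fin ℓ →₀ ℕ) (h : ∑ i, α i ≤ N) :
    ef ℓ (jf ℓ (toJ ℓ α h)) = α := by
  apply Finsupp.ext; intro i; simp [ef]

/-- the coefficient matrix of the family `T` in degrees at most `N` -/
def MM (N : ℕ) : Matrix (Jt ℓ N) (Jt ℓ N) Rt :=
  fun a d => coeff (ef ℓ (jf ℓ a)) (TT ℓ D F (jf ℓ d))

lemma MM_map_ev1 (N : ℕ) : (MM ℓ D F N).map (ev1) = 1 := by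
  funext a d
  rw [Matrix.map_apply, MM, show (ev1) (coeff (ef ℓ (jf ℓ a)) (TT ℓ D F (jf ℓ d)))
      = coeff (ef ℓ (jf ℓ a)) (MvPolynomial.map ev1 (TT ℓ D F (jf ℓ d))) from
        (MvPolynomial.coeff_map _ _ _).symm,
    map_ev1_TT, coeff_monomial, Matrix.one_apply]
  by_cases h : a = d
  · rw [if_pos h, if_pos (by rw [h])]
  · rw [if_neg h, if_neg]
    intro he
    exact h (jf_injective ℓ (funext fun i => by
      have := congrFun (congrArg (⇑) he) i
      simpa [ef] using this)).symm

lemma det_MM_ev1 (N : ℕ) : ev1 (Matrix.det (MM ℓ D F N)) = 1 := by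
  rw [RingHom.map_det, RingHom.mapMatrix_apply, MM_map_ev1, Matrix.det_one]

/-! ### The box index and the matrix relation -/

abbrev Bx : Type := Fin ℓ → Fin D

def wB (β : Bx ℓ D) : ℕ := ∑ i, (β i : ℕ)

def bf (β : Bx ℓ D) : Fin ℓ → ℕ := fun i => (β i : ℕ)

def Nb (β : Bx ℓ D) : ℕ := D + wB ℓ D β

variable [NeZero D]

def piB {N : ℕ} (d : Jt ℓ N) : Bx ℓ D := fun i => ⟨jf ℓ d i % D, Nat.mod_lt _ (NeZero.pos D)⟩

def yv (β : Bx ℓ D) : Jt ℓ (Nb ℓ D β) → Rt :=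
  fun a => coeff (ef ℓ (jf ℓ a)) (HH ℓ D F 0 * monomial (ef ℓ (bf ℓ D β)) 1)

def dd (β : Bx ℓ D) : Rt := (MM ℓ D F (Nb ℓ D β)).det

def cv (β : Bx ℓ D) : Jt ℓ (Nb ℓ D β) → Rt :=
  (Matrix.adjugate (MM ℓ D F (Nb ℓ D β))).mulVec (yv ℓ D F β)

def PP (β γ : Bx ℓ D) : MvPolynomial (Fin ℓ) Rt :=
  ∑ d ∈ Finset.univ.filter (fun d : Jt ℓ (Nb ℓ D β) => piB ℓ D d = γ),
    monomial (ef ℓ fun i => jf ℓ d i / D) (cv ℓ D F β d)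

def Φm : MvPolynomial (Fin ℓ) Rt →+* PX ℓ :=
  eval₂Hom (C : Rt →+* PX ℓ) (fun j : Fin ℓ => HH ℓ D F j.succ)

include hdeg in
lemma keyB (β : Bx ℓ D) :
    C (dd ℓ D F β) * (HH ℓ D F 0 * monomial (ef ℓ (bf ℓ D β)) 1)
      = ∑ d : Jt ℓ (Nb ℓ D β), C (cv ℓ D F β d) * TT ℓ D F (jf ℓ d) := by
  apply MvPolynomial.ext
  intro α
  rw [coeff_C_mul]
  rw [show coeff α (∑ d : Jt ℓ (Nb ℓ D β), C (cv ℓ D F β d) * TT ℓ D F (jf ℓ d))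
      = ∑ d : Jt ℓ (Nb ℓ D β), cv ℓ D F β d * coeff α (TT ℓ D F (jf ℓ d)) by
    rw [MvPolynomial.coeff_sum]
    exact Finset.sum_congr rfl fun d _ => coeff_C_mul _ _ _]
  by_cases h : ∑ i, α i ≤ Nb ℓ D β
  · set a := toJ ℓ α h with ha
    have hα : ef ℓ (jf ℓ a) = α := ef_jf_toJ ℓ α h
    have hL : coeff α (HH ℓ D F 0 * monomial (ef ℓ (bf ℓ D β)) 1) = yv ℓ D F β a := by
      rw [yv, hα]
    have hR : ∀ d, coeff α (TT ℓ D F (jf ℓ d)) = MM ℓ D F (Nb ℓ D β) a d := by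
      intro d; rw [MM, hα]
    rw [hL]
    refine Eq.symm ?_
    calc ∑ d : Jt ℓ (Nb ℓ D β), cv ℓ D F β d * coeff α (TT ℓ D F (jf ℓ d))
        = ∑ d : Jt ℓ (Nb ℓ D β), MM ℓ D F (Nb ℓ D β) a d * cv ℓ D F β d := by
          refine Finset.sum_congr rfl fun d _ => ?_
          rw [hR d, mul_comm]
      _ = Matrix.mulVec (MM ℓ D F (Nb ℓ D β)) (cv ℓ D F β) a := by
          simp [Matrix.mulVec, dotProduct]
      _ = (dd ℓ D F β • yv ℓ D F β) a := by
          rw [cv, Matrix.mulVec_mulVec, Matrix.mul_adjugate, Matrix.smul_mulVec,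
            Matrix.one_mulVec, dd]
      _ = dd ℓ D F β * yv ℓ D F β a := rfl
  · push_neg at h
    have hL : coeff α (HH ℓ D F 0 * monomial (ef ℓ (bf ℓ D β)) 1) = 0 := by
      apply coeff_zero_of_lt
      refine lt_of_le_of_lt ?_ h
      refine (totalDegree_mul _ _).trans ?_
      exact Nat.add_le_add (td_HH ℓ D F hdeg 0) (td_mono_le ℓ (bf ℓ D β))
    have hR : ∀ d : Jt ℓ (Nb ℓ D β), coeff α (TT ℓ D F (jf ℓ d)) = 0 := by
      intro d
      apply coeff_zero_of_lt
      refine lt_of_le_of_lt ?_ h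
      exact (td_TT ℓ D F hdeg _).trans (jf_sum_le ℓ d)
    rw [hL, mul_zero]
    refine (Finset.sum_eq_zero fun d _ => ?_).symm
    rw [hR d, mul_zero]

lemma keyA (β : Bx ℓ D) :
    ∑ γ : Bx ℓ D, Φm ℓ D F (PP ℓ D F β γ) * monomial (ef ℓ (bf ℓ D γ)) 1
      = ∑ d : Jt ℓ (Nb ℓ D β), C (cv ℓ D F β d) * TT ℓ D F (jf ℓ d) := by
  have hΦ : ∀ (s : Fin ℓ → ℕ) (r : Rt),
      Φm ℓ D F (monomial (ef ℓ s) r) = C r * ∏ j, HH ℓ D F j.succ ^ s j := by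
    intro s r
    rw [Φm, eval₂Hom_monomial, Finsupp.prod_fintype]
    · rfl
    · intro i; exact pow_zero _
  calc ∑ γ : Bx ℓ D, Φm ℓ D F (PP ℓ D F β γ) * monomial (ef ℓ (bf ℓ D γ)) 1
      = ∑ γ : Bx ℓ D, ∑ d ∈ Finset.univ.filter
            (fun d : Jt ℓ (Nb ℓ D β) => piB ℓ D d = γ),
          C (cv ℓ D F β d) * TT ℓ D F (jf ℓ d) := by
        refine Finset.sum_congr rfl fun γ _ => ?_
        rw [PP, map_sum, Finset.sum_mul]
        refine Finset.sum_congr rfl fun d hd => ?_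
        rw [hΦ]
        have hmod : bf ℓ D γ = fun i => jf ℓ d i % D := by
          funext i
          have := congrFun (Finset.mem_filter.mp hd).2 i
          exact (congrArg Fin.val this).symm
        rw [TT, hmod]
        ring
    _ = ∑ d : Jt ℓ (Nb ℓ D β), C (cv ℓ D F β d) * TT ℓ D F (jf ℓ d) :=
        Finset.sum_fiberwise _ _ _

/-! ### The annihilating determinant -/

abbrev ZP : Type := MvPolynomial (Fin (ℓ + 1)) Rt

def NN : Matrix (Bx ℓ D) (Bx ℓ D) (ZP ℓ) :=
  fun β γ => (if β = γ then C (dd ℓ D F β) * X 0 else 0) - rename Fin.succ (PP ℓ D F β γ)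

def Ψm : ZP ℓ →+* PX ℓ := eval₂Hom (C : Rt →+* PX ℓ) (HH ℓ D F)

lemma Ψm_rename (p : MvPolynomial (Fin ℓ) Rt) :
    Ψm ℓ D F (rename Fin.succ p) = Φm ℓ D F p := by
  rw [Ψm, Φm, coe_eval₂Hom, coe_eval₂Hom, eval₂_rename]
  rfl

include hdeg in
lemma key2 : Ψm ℓ D F (Matrix.det (NN ℓ D F)) = 0 := by
  classical
  set v : Bx ℓ D → PX ℓ := fun γ => monomial (ef ℓ (bf ℓ D γ)) 1 with hv
  set Mψ : Matrix (Bx ℓ D) (Bx ℓ D) (PX ℓ) := (NN ℓ D F).map (Ψm ℓ D F) with hMψ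
  have hrow : Matrix.mulVec Mψ v = 0 := by
    funext β
    have hentry : ∀ γ, Mψ β γ
        = (if β = γ then C (dd ℓ D F β) * HH ℓ D F 0 else 0) - Φm ℓ D F (PP ℓ D F β γ) := by
      intro γ
      rw [hMψ, Matrix.map_apply, NN, map_sub, Ψm_rename]
      congr 1
      split
      · rw [map_mul, Ψm, eval₂Hom_C, eval₂Hom_X']
      · exact map_zero _
    calc Matrix.mulVec Mψ v β = ∑ γ, Mψ β γ * v γ := rfl
      _ = (∑ γ, (if β = γ then C (dd ℓ D F β) * HH ℓ D F 0 else 0) * v γ)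
          - ∑ γ, Φm ℓ D F (PP ℓ D F β γ) * v γ := by
          rw [← Finset.sum_sub_distrib]
          refine Finset.sum_congr rfl fun γ _ => ?_
          rw [hentry γ, sub_mul]
      _ = C (dd ℓ D F β) * (HH ℓ D F 0 * v β)
          - ∑ γ, Φm ℓ D F (PP ℓ D F β γ) * v γ := by
          congr 1
          rw [show (∑ γ, (if β = γ then C (dd ℓ D F β) * HH ℓ D F 0 else 0) * v γ)
              = ∑ γ, (if β = γ then C (dd ℓ D F β) * HH ℓ D F 0 * v γ else 0) by
            refine Finset.sum_congr rfl fun γ _ => ?_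
            split <;> simp]
          rw [Finset.sum_ite_eq]
          simp [mul_assoc]
      _ = 0 := by
          rw [hv, keyB ℓ D F hdeg β, keyA ℓ D F β]
          exact sub_self _
  have hdet : Matrix.det Mψ = 0 := by
    have h1 : (Matrix.det Mψ) • v = 0 := by
      calc (Matrix.det Mψ) • v = ((Matrix.det Mψ) • (1 : Matrix (Bx ℓ D) (Bx ℓ D) (PX ℓ))).mulVec v := by
            rw [Matrix.smul_mulVec, Matrix.one_mulVec]
      _ = (Matrix.adjugate Mψ * Mψ).mulVec v := by rw [Matrix.adjugate_mul]
      _ = (Matrix.adjugate Mψ).mulVec (Matrix.mulVec Mψ v) := (Matrix.mulVec_mulVec _ _ _).symm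
      _ = 0 := by rw [hrow, Matrix.mulVec_zero]
    have h2 := congrFun h1 (fun _ => ⟨0, NeZero.pos D⟩ : Bx ℓ D)
    have h3 : v (fun _ => ⟨0, NeZero.pos D⟩ : Bx ℓ D) = 1 := by
      show (monomial (ef ℓ (bf ℓ D (fun _ => ⟨0, NeZero.pos D⟩ : Bx ℓ D)))) (1:Rt) = 1
      have h4 : ef ℓ (bf ℓ D (fun _ => ⟨0, NeZero.pos D⟩ : Bx ℓ D)) = 0 := by
        apply Finsupp.ext; intro i; simp [ef, bf]
      rw [h4]
      simp
    rw [Pi.smul_apply, h3, smul_eq_mul, mul_one, Pi.zero_apply] at h2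
    exact h2
  rw [RingHom.map_det, RingHom.mapMatrix_apply]
  exact hdet

/-- the evaluation to `Polynomial ℂ` specializing `t = 1`, `Z 0 ↦ X`, other `Z`s to `0`. -/
def χm : ZP ℓ →+* Polynomial ℂ :=
  eval₂Hom ((Polynomial.C : ℂ →+* Polynomial ℂ).comp (ev1))
    (Fin.cases Polynomial.X fun _ => 0)

def ψ1 : MvPolynomial (Fin ℓ) Rt →+* ℂ := eval₂Hom (ev1) fun _ => 0

lemma χm_rename (p : MvPolynomial (Fin ℓ) Rt) :
    χm ℓ (rename Fin.succ p) = Polynomial.C (ψ1 ℓ p) := by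
  rw [χm, coe_eval₂Hom, eval₂_rename, ψ1, coe_eval₂Hom,
    MvPolynomial.eval₂_comp_left (Polynomial.C : ℂ →+* Polynomial ℂ) (ev1)
      (fun _ : Fin ℓ => (0:ℂ)) p]
  congr 1
  funext j
  simp

lemma key3 : Matrix.det (NN ℓ D F) ≠ 0 := by
  intro hcon
  set qM : Matrix (Bx ℓ D) (Bx ℓ D) ℂ := fun β γ => ψ1 ℓ (PP ℓ D F β γ) with hq
  have hmap : (NN ℓ D F).map (χm ℓ) = Matrix.charmatrix qM := by
    funext β γ
    rw [Matrix.map_apply, NN, map_sub, χm_rename]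
    by_cases h : β = γ
    · subst h
      rw [if_pos rfl, Matrix.charmatrix_apply_eq, map_mul]
      have h1 : χm ℓ (C (dd ℓ D F β)) = 1 := by
        rw [χm, eval₂Hom_C, RingHom.comp_apply, dd, det_MM_ev1]
        exact Polynomial.C_1
      have h2 : χm ℓ (X 0 : ZP ℓ) = Polynomial.X := by
        rw [χm, eval₂Hom_X']
        simp
      rw [h1, h2, one_mul, hq]
    · rw [if_neg h, Matrix.charmatrix_apply_ne _ _ _ h, map_zero, zero_sub, hq]
  have : χm ℓ (Matrix.det (NN ℓ D F)) = qM.charpoly := by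
    rw [RingHom.map_det, RingHom.mapMatrix_apply, hmap, Matrix.charpoly]
  rw [hcon, map_zero] at this
  exact (Matrix.charpoly_monic qM).ne_zero this.symm

/-! ### Degree bound -/

lemma td_neg {A : Type*} [CommRing A] (p : MvPolynomial (Fin (ℓ+1)) A) :
    (-p).totalDegree = p.totalDegree := by
  rw [totalDegree, totalDegree, MvPolynomial.support_neg]

lemma td_sub {A : Type*} [CommRing A] (p q : MvPolynomial (Fin (ℓ+1)) A) :
    (p - q).totalDegree ≤ max p.totalDegree q.totalDegree := by
  rw [sub_eq_add_neg]
  exact (totalDegree_add _ _).trans (by rw [td_neg])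

lemma tdPP (β γ : Bx ℓ D) :
    PP ℓ D F β γ = 0 ∨ D * (PP ℓ D F β γ).totalDegree + wB ℓ D γ ≤ Nb ℓ D β := by
  classical
  set s := Finset.univ.filter (fun d : Jt ℓ (Nb ℓ D β) => piB ℓ D d = γ) with hs
  rcases s.eq_empty_or_nonempty with he | hne
  · left
    rw [PP, ← hs, he, Finset.sum_empty]
  · right
    have hbound : ∀ d ∈ s, D * (∑ i, jf ℓ d i / D) + wB ℓ D γ ≤ Nb ℓ D β := by
      intro d hd
      have hmod : ∀ i, (γ i : ℕ) = jf ℓ d i % D := by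
        intro i
        have := congrFun (Finset.mem_filter.mp hd).2 i
        exact (congrArg Fin.val this).symm
      calc D * (∑ i, jf ℓ d i / D) + wB ℓ D γ
          = ∑ i, (D * (jf ℓ d i / D) + jf ℓ d i % D) := by
            rw [wB, Finset.mul_sum, ← Finset.sum_add_distrib]
            exact Finset.sum_congr rfl fun i _ => by rw [hmod i]
        _ = ∑ i, jf ℓ d i := Finset.sum_congr rfl fun i _ => Nat.div_add_mod _ _
        _ ≤ Nb ℓ D β := jf_sum_le ℓ d
    obtain ⟨d₀, hd₀, hsup⟩ := Finset.exists_mem_eq_sup s hne (fun d => ∑ i, jf ℓ d i / D)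
    have htd : (PP ℓ D F β γ).totalDegree ≤ ∑ i, jf ℓ d₀ i / D := by
      rw [PP, ← hs]
      refine (totalDegree_finset_sum _ _).trans ?_
      rw [← hsup] at *
      refine Finset.sup_le fun d hd => ?_
      refine le_trans ?_ (Finset.le_sup (f := fun d => ∑ i, jf ℓ d i / D) hd)
      refine (totalDegree_monomial_le _ _).trans ?_
      rw [show ((ef ℓ fun i => jf ℓ d i / D).sum fun _ e => id e)
          = ((ef ℓ fun i => jf ℓ d i / D).sum fun _ e => e) from rfl, ef_sum]
    calc D * (PP ℓ D F β γ).totalDegree + wB ℓ D γ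
        ≤ D * (∑ i, jf ℓ d₀ i / D) + wB ℓ D γ :=
          Nat.add_le_add_right (Nat.mul_le_mul_left _ htd) _
      _ ≤ Nb ℓ D β := hbound d₀ hd₀

lemma entryBound (β γ : Bx ℓ D) :
    NN ℓ D F β γ = 0 ∨ D * (NN ℓ D F β γ).totalDegree + wB ℓ D γ ≤ D + wB ℓ D β := by
  have hren : (rename (Fin.succ) (PP ℓ D F β γ)).totalDegree ≤ (PP ℓ D F β γ).totalDegree :=
    totalDegree_rename_le _ _
  rcases tdPP ℓ D F β γ with h0 | hb
  · by_cases h : β = γ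
    · right
      subst h
      rw [NN, if_pos rfl, h0, map_zero, sub_zero]
      have : (C (dd ℓ D F β) * (X 0 : ZP ℓ)).totalDegree ≤ 1 := by
        refine (totalDegree_mul _ _).trans ?_
        rw [totalDegree_C, zero_add]
        exact le_of_eq (totalDegree_X _)
      calc D * (C (dd ℓ D F β) * (X 0 : ZP ℓ)).totalDegree + wB ℓ D β
          ≤ D * 1 + wB ℓ D β := Nat.add_le_add_right (Nat.mul_le_mul_left _ this) _
        _ = D + wB ℓ D β := by rw [mul_one]
    · left
      rw [NN, if_neg h, h0, map_zero, sub_zero]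
  · right
    have hPP : D * (rename (Fin.succ) (PP ℓ D F β γ)).totalDegree + wB ℓ D γ
        ≤ D + wB ℓ D β := by
      refine le_trans ?_ hb
      exact Nat.add_le_add_right (Nat.mul_le_mul_left _ hren) _
    by_cases h : β = γ
    · subst h
      rw [NN, if_pos rfl]
      have ht1 : (C (dd ℓ D F β) * (X 0 : ZP ℓ)).totalDegree ≤ 1 := by
        refine (totalDegree_mul _ _).trans ?_
        rw [totalDegree_C, zero_add]
        exact le_of_eq (totalDegree_X _)
      have ht2 : (PP ℓ D F β β).totalDegree ≤ 1 := by
        have hD := NeZero.pos D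
        have h1 : D * (PP ℓ D F β β).totalDegree ≤ D := by
          have := hb
          rw [Nb] at this
          omega
        have h2 : D * (PP ℓ D F β β).totalDegree ≤ D * 1 := by rwa [mul_one]
        exact Nat.le_of_mul_le_mul_left h2 hD
      have ht : (C (dd ℓ D F β) * (X 0 : ZP ℓ)
          - rename (Fin.succ) (PP ℓ D F β β)).totalDegree ≤ 1 :=
        (td_sub ℓ _ _).trans (max_le ht1 (hren.trans ht2))
      calc D * (C (dd ℓ D F β) * (X 0 : ZP ℓ)
            - rename (Fin.succ) (PP ℓ D F β β)).totalDegree + wB ℓ D β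
          ≤ D * 1 + wB ℓ D β := Nat.add_le_add_right (Nat.mul_le_mul_left _ ht) _
        _ = D + wB ℓ D β := by rw [mul_one]
    · rw [NN, if_neg h, zero_sub, td_neg]
      refine le_trans ?_ hb
      exact Nat.add_le_add_right (Nat.mul_le_mul_left _ hren) _

lemma key4 : (Matrix.det (NN ℓ D F)).totalDegree ≤ D ^ ℓ := by
  classical
  rw [Matrix.det_apply]
  refine totalDegree_finsetSum_le fun σ _ => ?_
  have hsmul : (Equiv.Perm.sign σ • ∏ β, NN ℓ D F (σ β) β).totalDegree
      ≤ (∏ β, NN ℓ D F (σ β) β).totalDegree := by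
    rcases Int.units_eq_one_or (Equiv.Perm.sign σ) with h | h
    · rw [h, one_smul]
    · rw [h, Units.smul_def, Units.val_neg, Units.val_one, neg_smul, one_smul, td_neg]
  refine hsmul.trans ?_
  by_cases hz : ∃ β, NN ℓ D F (σ β) β = 0
  · obtain ⟨β₀, hβ₀⟩ := hz
    rw [Finset.prod_eq_zero (f := fun β => NN ℓ D F (σ β) β) (Finset.mem_univ β₀) hβ₀]
    simp
  · push_neg at hz
    have hB : ∀ β, D * (NN ℓ D F (σ β) β).totalDegree + wB ℓ D β ≤ D + wB ℓ D (σ β) :=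
      fun β => (entryBound ℓ D F (σ β) β).resolve_left (hz β)
    have hsum : D * (∑ β, (NN ℓ D F (σ β) β).totalDegree) + ∑ β, wB ℓ D β
        ≤ D * (Fintype.card (Bx ℓ D)) + ∑ β, wB ℓ D β := by
      calc D * (∑ β, (NN ℓ D F (σ β) β).totalDegree) + ∑ β, wB ℓ D β
          = ∑ β, (D * (NN ℓ D F (σ β) β).totalDegree + wB ℓ D β) := by
            rw [Finset.mul_sum, Finset.sum_add_distrib]
        _ ≤ ∑ β, (D + wB ℓ D (σ β)) := Finset.sum_le_sum fun β _ => hB β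
        _ = D * (Fintype.card (Bx ℓ D)) + ∑ β, wB ℓ D (σ β) := by
            rw [Finset.sum_add_distrib, Finset.sum_const, Finset.card_univ, smul_eq_mul,
              mul_comm]
        _ = D * (Fintype.card (Bx ℓ D)) + ∑ β, wB ℓ D β := by
            rw [Equiv.sum_comp σ (wB ℓ D)]
    have h2 : ∑ β, (NN ℓ D F (σ β) β).totalDegree ≤ Fintype.card (Bx ℓ D) := by
      have h3 : D * (∑ β, (NN ℓ D F (σ β) β).totalDegree)
          ≤ D * (Fintype.card (Bx ℓ D)) := by omega
      exact Nat.le_of_mul_le_mul_left h3 (NeZero.pos D)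
    have hcard : Fintype.card (Bx ℓ D) = D ^ ℓ := by
      rw [Fintype.card_fun]
      simp
    exact (totalDegree_finset_prod _ _).trans (h2.trans_eq hcard)

/-! ### Final specialization at `t = 0` -/

include hdeg in
lemma final :
    ∃ R : MvPolynomial (Fin (ℓ + 1)) ℂ, R ≠ 0 ∧ R.totalDegree ≤ D ^ ℓ ∧
      aeval F R = 0 := by
  classical
  set Rb := Matrix.det (NN ℓ D F) with hRb
  have hne := key3 ℓ D F
  have hann := key2 ℓ D F hdeg
  have hdeg4 := key4 ℓ D F
  have hex : ∃ n, ∃ m, ((coeff m Rb).coeff n) ≠ 0 := by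
    obtain ⟨m, hm⟩ := MvPolynomial.ne_zero_iff.mp (hRb ▸ hne)
    obtain ⟨n, hn⟩ : ∃ n, (coeff m Rb).coeff n ≠ 0 := by
      by_contra hcon
      push_neg at hcon
      exact hm (Polynomial.ext fun n => by rw [hcon n, Polynomial.coeff_zero])
    exact ⟨n, m, hn⟩
  set k := Nat.find hex with hk
  have hdvd : ∀ m, (Polynomial.X : Rt) ^ k ∣ coeff m Rb := by
    intro m
    rw [Polynomial.X_pow_dvd_iff]
    intro d hd
    by_contra hc
    exact Nat.find_min hex hd ⟨m, hc⟩
  choose q hq using hdvd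
  have hq0 : ∀ m, coeff m Rb = 0 → q m = 0 := by
    intro m h0
    have h1 := (hq m).symm
    rw [h0] at h1
    rcases mul_eq_zero.mp h1 with h | h
    · exact absurd h (pow_ne_zero _ Polynomial.X_ne_zero)
    · exact h
  set S : ZP ℓ := ∑ m ∈ Rb.support, monomial m (q m) with hS
  have hScoeff : ∀ m, coeff m S = q m := by
    intro m
    calc coeff m S = ∑ m' ∈ Rb.support, (if m' = m then q m' else 0) := by
          rw [hS, MvPolynomial.coeff_sum]
          exact Finset.sum_congr rfl fun m' _ => coeff_monomial _ _ _
      _ = if m ∈ Rb.support then q m else 0 := Finset.sum_ite_eq' _ _ _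
      _ = q m := by
          split
          · rfl
          · next hm => exact (hq0 m (notMem_support_iff.mp hm)).symm
  have hRS : Rb = C ((Polynomial.X : Rt) ^ k) * S := by
    apply MvPolynomial.ext; intro m
    rw [coeff_C_mul, hScoeff, ← hq m]
  have hSann : Ψm ℓ D F S = 0 := by
    have h1 : Ψm ℓ D F Rb = C ((Polynomial.X : Rt) ^ k) * Ψm ℓ D F S := by
      rw [hRS, map_mul, Ψm, eval₂Hom_C]
    rw [hann] at h1
    rcases mul_eq_zero.mp h1.symm with h | h
    · exact absurd (MvPolynomial.C_injective _ _ (h.trans MvPolynomial.C_0.symm))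
        (pow_ne_zero _ Polynomial.X_ne_zero)
    · exact h
  set Rfin : MvPolynomial (Fin (ℓ + 1)) ℂ := MvPolynomial.map (ev0) S with hRfin
  have hcomp : ((MvPolynomial.map (ev0)) : PX ℓ →+* MvPolynomial (Fin ℓ) ℂ).comp (Ψm ℓ D F)
      = ((eval₂Hom (C : ℂ →+* MvPolynomial (Fin ℓ) ℂ) F).comp
          ((MvPolynomial.map (ev0)) : ZP ℓ →+* MvPolynomial (Fin (ℓ + 1)) ℂ)) := by
    apply MvPolynomial.ringHom_ext
    · intro r
      rw [RingHom.comp_apply, RingHom.comp_apply, Ψm, eval₂Hom_C, MvPolynomial.map_C,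
        MvPolynomial.map_C, eval₂Hom_C]
    · intro i
      rw [RingHom.comp_apply, RingHom.comp_apply, Ψm, eval₂Hom_X', MvPolynomial.map_X,
        eval₂Hom_X', map_ev0_HH]
  have hannℂ : eval₂Hom (C : ℂ →+* MvPolynomial (Fin ℓ) ℂ) F Rfin = 0 := by
    calc eval₂Hom (C : ℂ →+* MvPolynomial (Fin ℓ) ℂ) F Rfin
        = ((eval₂Hom (C : ℂ →+* MvPolynomial (Fin ℓ) ℂ) F).comp
            ((MvPolynomial.map (ev0)) : ZP ℓ →+* MvPolynomial (Fin (ℓ + 1)) ℂ)) S := rfl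
      _ = ((MvPolynomial.map (ev0)) : PX ℓ →+* MvPolynomial (Fin ℓ) ℂ).comp (Ψm ℓ D F) S := by
          rw [hcomp]
      _ = 0 := by rw [RingHom.comp_apply, hSann, map_zero]
  obtain ⟨m₀, hm₀⟩ := Nat.find_spec hex
  have hq₀ : (q m₀).coeff 0 ≠ 0 := by
    rw [← hk] at hm₀
    have hxc : (Polynomial.X ^ k * q m₀).coeff (0 + k) = (q m₀).coeff 0 :=
      Polynomial.coeff_X_pow_mul _ _ _
    rw [zero_add] at hxc
    rw [hq m₀, hxc] at hm₀
    exact hm₀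
  have hRfin_ne : Rfin ≠ 0 := by
    intro hc
    have h0 : coeff m₀ Rfin = 0 := by rw [hc]; simp
    rw [hRfin, MvPolynomial.coeff_map, hScoeff] at h0
    rw [Polynomial.coeff_zero_eq_eval_zero] at hq₀
    exact hq₀ h0
  have hsupS : S.support ⊆ Rb.support := by
    intro m hm
    rw [mem_support_iff] at hm ⊢
    intro hc
    apply hm
    rw [hScoeff]
    exact hq0 m hc
  have htdS : S.totalDegree ≤ Rb.totalDegree := Finset.sup_mono hsupS
  have htdR : Rfin.totalDegree ≤ D ^ ℓ := by
    refine le_trans ?_ (htdS.trans hdeg4)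
    exact Finset.sup_mono (support_map_subset _ _)
  refine ⟨Rfin, hRfin_ne, htdR, ?_⟩
  rw [aeval_def, MvPolynomial.algebraMap_eq]
  exact hannℂ

end Perron13

end Perron13

/-- Lemma 2.10 (effective algebraic dependence, Perron-type bound): any `ℓ+1`
polynomials in `ℓ` variables of total degree at most `D ≥ 1` admit a nonzero
annihilating polynomial `R` of total degree at most `D^ℓ`. -/
theorem stmt_13 (ℓ D : ℕ) (hD : 1 ≤ D)
    (F : Fin (ℓ + 1) → MvPolynomial (Fin ℓ) ℂ)
    (hdeg : ∀ i, (F i).totalDegree ≤ D) :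
    ∃ R : MvPolynomial (Fin (ℓ + 1)) ℂ, R ≠ 0 ∧ R.totalDegree ≤ D ^ ℓ ∧
      aeval F R = 0 := by
  haveI : NeZero D := ⟨Nat.one_le_iff_ne_zero.mp hD⟩
  exact Perron13.final ℓ D F hdeg
end
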